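/- Let Ω ⊆ ℝ^d be open, let Z₁,…,Z_m : closure(Ω) → ℝ^d be locally Lipschitz vector fields, and let K ≠ ∅ be a relatively closed subset of Ω. If for every x ∈ K* ∩ Ω and every generalized exterior normal ν to K at x one has Z_i(x)·ν = 0 for all i = 1,…,m, then K is invariant for the control system (S): for every x ∈ K, every admissible control β and every τ > 0 such that the solution y_x(·,β) exists on [0,τ), one has y_x(t,β) ∈ K for all t ∈ [0,τ). -/

import Mathlib

open Set Metric Filter Topology

noncomputable section

/-- Euclidean space `ℝ^d`. -/
abbrev EV (d : ℕ) := EuclideanSpace ℝ (Fin d)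

/-- The outer product `p ⊗ p` as a `d × d` matrix. -/
def outer {d : ℕ} (p : EV d) : Matrix (Fin d) (Fin d) ℝ := Matrix.of fun i j => p i * p j

/-- Euclidean dot product. -/
def dotp {d : ℕ} (p q : EV d) : ℝ := ∑ i, p i * q i

/-- Euclidean gradient. -/
def grad {d : ℕ} (φ : EV d → ℝ) (x : EV d) : EV d :=
  (EuclideanSpace.equiv (Fin d) ℝ).symm fun i => fderiv ℝ φ x (EuclideanSpace.single i 1)

/-- Euclidean Hessian matrix. -/
def hess {d : ℕ} (φ : EV d → ℝ) (x : EV d) : Matrix (Fin d) (Fin d) ℝ :=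
  Matrix.of fun i j =>
    fderiv ℝ (fun y => fderiv ℝ φ y (EuclideanSpace.single j 1)) x (EuclideanSpace.single i 1)

/-- `F` is proper: nondecreasing in `r`, nonincreasing in the matrix argument
(w.r.t. the positive semidefinite order `Y ≤ X ↔ (X - Y).PosSemidef`). -/
def IsProper {d m : ℕ} (Ω : Set (EV d))
    (F : EV d → ℝ → EV m → Matrix (Fin m) (Fin m) ℝ → ℝ) : Prop :=
  ∀ x ∈ Ω, ∀ r s : ℝ, ∀ p : EV m, ∀ X Y : Matrix (Fin m) (Fin m) ℝ,
    r ≤ s → (X - Y).PosSemidef → F x r p X ≤ F x s p Y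

/-- Lower semicontinuity of the operator `F`, jointly in all its arguments. -/
def IsLscOperator {d m : ℕ} (Ω : Set (EV d))
    (F : EV d → ℝ → EV m → Matrix (Fin m) (Fin m) ℝ → ℝ) : Prop :=
  LowerSemicontinuousOn
    (fun q : EV d × ℝ × EV m × Matrix (Fin m) (Fin m) ℝ => F q.1 q.2.1 q.2.2.1 q.2.2.2)
    {q | q.1 ∈ Ω ∧ q.2.2.1 ≠ 0 ∧ q.2.2.2.IsSymm}

/-- Condition (ii) (scaling): for some `φ : (0,1] → (0,∞)`,
`F(x, ξs, ξp, ξX) ≥ φ(ξ) F(x,s,p,X)` for all `ξ ∈ (0,1]`, `s ∈ [-1,0]`. -/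
def HasScaling {d m : ℕ} (Ω : Set (EV d))
    (F : EV d → ℝ → EV m → Matrix (Fin m) (Fin m) ℝ → ℝ) : Prop :=
  ∃ φ : ℝ → ℝ, (∀ ξ ∈ Ioc (0:ℝ) 1, 0 < φ ξ) ∧
    ∀ ξ ∈ Ioc (0:ℝ) 1, ∀ s ∈ Icc (-1:ℝ) 0, ∀ x ∈ Ω, ∀ p : EV m, p ≠ 0 →
      ∀ X : Matrix (Fin m) (Fin m) ℝ, X.IsSymm →
        φ ξ * F x s p X ≤ F x (ξ * s) (ξ • p) (ξ • X)

/-- Ellipticity condition (elli) for a subelliptic operator `G`. -/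
def IsElliptic {d m : ℕ} (Ω : Set (EV d))
    (G : EV d → ℝ → EV m → Matrix (Fin m) (Fin m) ℝ → ℝ) : Prop :=
  ∀ x ∈ Ω, ∀ q : EV m, q ≠ 0 → ∀ X : Matrix (Fin m) (Fin m) ℝ, X.IsSymm →
    ∃ γ : ℝ, 0 < γ ∧ 0 < G x 0 q (X - γ • outer q)

/-- `Z` is a generalized subunit vector for `F` at `x`:
`sup_{γ>0} F(x,0,p, I - γ p⊗p) > 0` whenever `Z·p ≠ 0`. -/
def IsSubunitAt {d : ℕ} (F : EV d → ℝ → EV d → Matrix (Fin d) (Fin d) ℝ → ℝ)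
    (x : EV d) (Z : EV d) : Prop :=
  ∀ p : EV d, dotp Z p ≠ 0 → ∃ γ : ℝ, 0 < γ ∧ 0 < F x 0 p (1 - γ • outer p)

/-- Viscosity subsolution (test functions with nonvanishing gradient). -/
def IsViscSubsol {d : ℕ} (Ω : Set (EV d))
    (F : EV d → ℝ → EV d → Matrix (Fin d) (Fin d) ℝ → ℝ) (u : EV d → ℝ) : Prop :=
  ∀ φ : EV d → ℝ, ContDiff ℝ 2 φ → ∀ x ∈ Ω,
    IsLocalMaxOn (fun y => u y - φ y) Ω x → grad φ x ≠ 0 →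
      F x (u x) (grad φ x) (hess φ x) ≤ 0

/-- Viscosity supersolution (test functions with nonvanishing gradient). -/
def IsViscSupersol {d : ℕ} (Ω : Set (EV d))
    (F : EV d → ℝ → EV d → Matrix (Fin d) (Fin d) ℝ → ℝ) (v : EV d → ℝ) : Prop :=
  ∀ φ : EV d → ℝ, ContDiff ℝ 2 φ → ∀ x ∈ Ω,
    IsLocalMinOn (fun y => v y - φ y) Ω x → grad φ x ≠ 0 →
      0 ≤ F x (v x) (grad φ x) (hess φ x)

/-- Viscosity subsolution (all `C²` test functions). -/
def IsViscSubsolAll {d : ℕ} (Ω : Set (EV d))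
    (F : EV d → ℝ → EV d → Matrix (Fin d) (Fin d) ℝ → ℝ) (u : EV d → ℝ) : Prop :=
  ∀ φ : EV d → ℝ, ContDiff ℝ 2 φ → ∀ x ∈ Ω,
    IsLocalMaxOn (fun y => u y - φ y) Ω x →
      F x (u x) (grad φ x) (hess φ x) ≤ 0

/-- Viscosity supersolution (all `C²` test functions). -/
def IsViscSupersolAll {d : ℕ} (Ω : Set (EV d))
    (F : EV d → ℝ → EV d → Matrix (Fin d) (Fin d) ℝ → ℝ) (v : EV d → ℝ) : Prop :=
  ∀ φ : EV d → ℝ, ContDiff ℝ 2 φ → ∀ x ∈ Ω,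
    IsLocalMinOn (fun y => v y - φ y) Ω x →
      0 ≤ F x (v x) (grad φ x) (hess φ x)

/-- Locally Lipschitz on a set. -/
def LocLipschitzOn {α β : Type*} [PseudoMetricSpace α] [PseudoMetricSpace β]
    (f : α → β) (s : Set α) : Prop :=
  ∀ x ∈ s, ∃ K : NNReal, ∃ ε : ℝ, 0 < ε ∧ LipschitzOnWith K f (s ∩ Metric.ball x ε)

/-- Admissible controls: measurable, with `∑ i βᵢ(t)² ≤ 1`. -/
def Admissible {m : ℕ} (β : ℝ → Fin m → ℝ) : Prop :=
  (∀ i, Measurable fun t => β t i) ∧ ∀ t : ℝ, ∑ i, (β t i) ^ 2 ≤ 1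

/-- (Carathéodory) trajectory of the control system `y' = ∑ᵢ βᵢ Zᵢ(y)` on `[0, T]`. -/
def IsTrajOn {d m : ℕ} (Z : Fin m → EV d → EV d) (β : ℝ → Fin m → ℝ)
    (y : ℝ → EV d) (T : ℝ) : Prop :=
  ContinuousOn y (Icc 0 T) ∧
    ∀ t ∈ Icc 0 T, y t = y 0 + ∫ s in (0:ℝ)..t, ∑ i, β s i • Z i (y s)

/-- `x₁` is reachable from `x₀` by the control system, with trajectory staying in `Ω`. -/
def ReachableIn {d m : ℕ} (Ω : Set (EV d)) (Z : Fin m → EV d → EV d)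
    (x₀ x₁ : EV d) : Prop :=
  ∃ (β : ℝ → Fin m → ℝ) (y : ℝ → EV d) (T : ℝ), 0 ≤ T ∧ Admissible β ∧
    IsTrajOn Z β y T ∧ (∀ t ∈ Icc 0 T, y t ∈ Ω) ∧ y 0 = x₀ ∧ y T = x₁

/-- Bounded time controllability in `Ω`. -/
def BTC {d m : ℕ} (Ω : Set (EV d)) (Z : Fin m → EV d → EV d) : Prop :=
  ∀ x₀ ∈ Ω, ∀ x₁ ∈ Ω, ReachableIn Ω Z x₀ x₁

/-- Generalized exterior (Bony, proximal) normal `ν` to `K` at `z`. -/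
def IsExtNormal {d : ℕ} (K : Set (EV d)) (z ν : EV d) : Prop :=
  z ∈ frontier K ∧ ‖ν‖ = 1 ∧
    ∃ t : ℝ, 0 < t ∧ Metric.closedBall (z + t • ν) t ∩ closure K = {z}

/-- Lie bracket of two vector fields. -/
def vfBracket {d : ℕ} (X Y : EV d → EV d) : EV d → EV d :=
  fun x => fderiv ℝ Y x (X x) - fderiv ℝ X x (Y x)

/-- Vector fields obtained from `Z₁,…,Z_m` by iterated Lie brackets. -/
inductive LieGenerated {d m : ℕ} (Z : Fin m → EV d → EV d) : (EV d → EV d) → Prop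
  | base (i : Fin m) : LieGenerated Z (Z i)
  | bracket {X Y : EV d → EV d} :
      LieGenerated Z X → LieGenerated Z Y → LieGenerated Z (vfBracket X Y)

/-- Hörmander condition: the fields and their iterated brackets span `ℝ^d` at every point of `Ω`. -/
def Hormander {d m : ℕ} (Ω : Set (EV d)) (Z : Fin m → EV d → EV d) : Prop :=
  ∀ x ∈ Ω, Submodule.span ℝ {v : EV d | ∃ W, LieGenerated Z W ∧ W x = v} = ⊤

/-- Intrinsic (horizontal) gradient `σ(x)ᵀ p`. -/
def sigmaT {d m : ℕ} (σ : Fin m → EV d → EV d) (x : EV d) (p : EV d) : EV m :=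
  (EuclideanSpace.equiv (Fin m) ℝ).symm fun j => ∑ i, σ j x i * p i

/-- `σ(x)ᵀ X σ(x)` as an `m × m` matrix. -/
def sigmaHess {d m : ℕ} (σ : Fin m → EV d → EV d) (x : EV d)
    (X : Matrix (Fin d) (Fin d) ℝ) : Matrix (Fin m) (Fin m) ℝ :=
  Matrix.of fun j k => ∑ i, ∑ l, σ j x i * X i l * σ k x l

/-- First-order correction term `g(x,p)` of the symmetrized intrinsic Hessian. -/
def corrTerm {d m : ℕ} (σ : Fin m → EV d → EV d) (x : EV d) (p : EV d) :
    Matrix (Fin m) (Fin m) ℝ :=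
  Matrix.of fun j k =>
    ((∑ i, (fderiv ℝ (σ k) x (σ j x)) i * p i) +
      (∑ i, (fderiv ℝ (σ j) x (σ k x)) i * p i)) / 2

/-- Euclidean form `F(x,r,p,X) = G(x, r, σᵀp, σᵀXσ + g(x,p))` of a subelliptic operator. -/
def euclOp {d m : ℕ} (σ : Fin m → EV d → EV d)
    (G : EV d → ℝ → EV m → Matrix (Fin m) (Fin m) ℝ → ℝ) :
    EV d → ℝ → EV d → Matrix (Fin d) (Fin d) ℝ → ℝ :=
  fun x r p X => G x r (sigmaT σ x p) (sigmaHess σ x X + corrTerm σ x p)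

/-- `A ≥ Z ⊗ Z` in the quadratic-form sense: `ξᵀAξ ≥ (Z·ξ)²` for all `ξ`. -/
def matGEouter {d : ℕ} (A : Matrix (Fin d) (Fin d) ℝ) (Z : EV d) : Prop :=
  ∀ ξ : EV d, (dotp Z ξ) ^ 2 ≤ ∑ i, ∑ j, A i j * ξ i * ξ j

/-!
Bony's argument. The set of times in `[0, t]` at which the trajectory lies in `K` is closed, so it
suffices that it is open to the right at each of its points `T`. Near `y T` the fields are
`L`-Lipschitz; for `g = dist(y, K)²` and a nearest point `z ∈ closure K` to `y s`, the vector
`y s - z` is a multiple of a generalized exterior normal at `z`, so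
`⟪y s - z, ẏ σ⟫ = ⟪y s - z, ẏ σ - ∑ βᵢ(σ) Zᵢ(z)⟫ ≤ m L ‖y s - z‖ ‖y σ - z‖`.
Expanding `g u ≤ ‖y u - z‖²` gives the right Dini derivative bound `D⁺g ≤ 2 m L g`, and Grönwall's
inequality with `g T = 0` keeps `g = 0` for a while after `T`.
-/

open scoped RealInnerProductSpace

theorem dotp_eq_inner {d : ℕ} (p q : EV d) : dotp p q = ⟪p, q⟫ := by
  simp [dotp, PiLp.inner_apply, RCLike.inner_apply, mul_comm]

theorem isExtNormal_of_infDist_eq {d : ℕ} {K : Set (EV d)} {x z : EV d} (hz : z ∈ closure K)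
    (hxz : x ≠ z) (hx : infDist x K = dist x z) :
    IsExtNormal K z (‖x - z‖⁻¹ • (x - z)) := by
  have hρ : 0 < dist x z := dist_pos.2 hxz
  have hfar : ∀ w ∈ closure K, dist x z ≤ dist x w := fun w hw =>
    hx ▸ infDist_closure (s := K) ▸ infDist_le_dist_of_mem hw
  refine ⟨?_, norm_smul_inv_norm (sub_ne_zero.2 hxz), dist x z / 2, by positivity, ?_⟩
  · rw [frontier_eq_closure_inter_closure]
    have hball : ball x (dist x z) ⊆ Kᶜ := fun w hw hwK =>
      (hfar w (subset_closure hwK)).not_gt (mem_ball'.1 hw)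
    refine ⟨hz, closure_mono hball ?_⟩
    rw [closure_ball x hρ.ne']
    exact mem_closedBall'.2 le_rfl
  · have hcenter : z + (dist x z / 2) • (‖x - z‖⁻¹ • (x - z)) = midpoint ℝ x z := by
      rw [← dist_eq_norm, smul_smul, show dist x z / 2 * (dist x z)⁻¹ = 2⁻¹ by field_simp,
        eq_comm, ← sub_eq_iff_eq_add', midpoint_sub_right, invOf_eq_inv]
    have hxc : dist x (midpoint ℝ x z) = dist x z / 2 := by
      rw [dist_left_midpoint, Real.norm_two, inv_mul_eq_div]
    rw [hcenter]
    ext w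
    simp only [mem_inter_iff, mem_closedBall, mem_singleton_iff]
    constructor
    · rintro ⟨hwc, hwK⟩
      have hxw : dist x w ≤ dist x z := by
        linarith [dist_triangle x (midpoint ℝ x z) w, dist_comm w (midpoint ℝ x z)]
      have hxw' : dist x w = dist x z := le_antisymm hxw (hfar w hwK)
      have hmid : midpoint ℝ x z = midpoint ℝ x w :=
        eq_midpoint_of_dist_eq_half (by rw [hxc, hxw'])
          (by linarith [dist_triangle x (midpoint ℝ x z) w, dist_comm w (midpoint ℝ x z)])
      exact (midpoint_eq_iff.1 hmid.symm).symm.trans (midpoint_eq_iff.1 rfl)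
    · rintro rfl
      exact ⟨by rw [dist_right_midpoint, Real.norm_two, inv_mul_eq_div], hz⟩

theorem inner_sub_eq_zero_of_isExtNormal {d : ℕ} {K : Set (EV d)} {V p z : EV d}
    (hV : ∀ ν, IsExtNormal K z ν → dotp V ν = 0) (hz : z ∈ closure K)
    (hpz : infDist p K = dist p z) : ⟪p - z, V⟫ = 0 := by
  rcases eq_or_ne p z with rfl | hne
  · simp
  have h := hV _ (isExtNormal_of_infDist_eq hz hne hpz)
  rw [dotp_eq_inner, real_inner_smul_right, real_inner_comm] at h
  exact (mul_eq_zero.1 h).resolve_left (inv_ne_zero (norm_ne_zero_iff.2 (sub_ne_zero.2 hne)))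

theorem LocLipschitzOn.continuousOn {α β : Type*} [PseudoMetricSpace α] [PseudoMetricSpace β]
    {f : α → β} {s : Set α} (hf : LocLipschitzOn f s) : ContinuousOn f s := fun x hx => by
  obtain ⟨K, ε, hε, hK⟩ := hf x hx
  exact (hK.continuousOn x ⟨hx, mem_ball_self hε⟩).mono_of_mem_nhdsWithin
    (inter_mem_nhdsWithin s (ball_mem_nhds x hε))

theorem LocLipschitzOn.exists_ball_subset_forall_lipschitzOnWith {α β ι : Type*}
    [PseudoMetricSpace α] [PseudoMetricSpace β] [Fintype ι] {f : ι → α → β} {Ω : Set α}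
    (hΩ : IsOpen Ω) (hf : ∀ i, LocLipschitzOn (f i) (closure Ω)) {x : α} (hx : x ∈ Ω) :
    ∃ L : NNReal, ∃ r > 0, ball x r ⊆ Ω ∧ ∀ i, LipschitzOnWith L (f i) (ball x r) := by
  choose L ε hε hL using fun i => hf i x (subset_closure hx)
  have hnhds : ∀ᶠ p in 𝓝 x, p ∈ Ω ∧ ∀ i, p ∈ ball x (ε i) :=
    (hΩ.eventually_mem hx).and (eventually_all.2 fun i => ball_mem_nhds x (hε i))
  obtain ⟨r, hr, hsub⟩ := Metric.mem_nhds_iff.1 hnhds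
  refine ⟨Finset.univ.sup L, r, hr, fun p hp => (hsub hp).1, fun i => ?_⟩
  refine ((hL i).mono fun p hp => ?_).weaken (Finset.le_sup (Finset.mem_univ i))
  exact ⟨subset_closure (hsub hp).1, (hsub hp).2 i⟩

theorem LipschitzOnWith.norm_le_add_of_mem_ball {α E : Type*} [PseudoMetricSpace α]
    [SeminormedAddCommGroup E] {f : α → E} {L : NNReal} {x p : α} {r : ℝ}
    (hf : LipschitzOnWith L f (ball x r)) (hp : p ∈ ball x r) : ‖f p‖ ≤ ‖f x‖ + L * r := by
  have hdist := hf.dist_le_mul p hp x (mem_ball_self (pos_of_mem_ball hp))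
  rw [dist_eq_norm] at hdist
  linarith [norm_le_norm_add_norm_sub' (f p) (f x),
    mul_le_mul_of_nonneg_left (mem_ball.1 hp).le L.coe_nonneg]

theorem ContinuousOn.isClosed_preimage_inter_Icc {X : Type*} [TopologicalSpace X] {y : ℝ → X}
    {K Ω : Set X} {a b : ℝ} (hy : ContinuousOn y (Icc a b)) (hyΩ : MapsTo y (Icc a b) Ω)
    (hKcl : closure K ∩ Ω ⊆ K) : IsClosed (y ⁻¹' K ∩ Icc a b) := by
  have hK : y ⁻¹' K ∩ Icc a b = Icc a b ∩ y ⁻¹' closure K := by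
    ext s
    exact ⟨fun hs => ⟨hs.2, subset_closure hs.1⟩, fun hs => ⟨hKcl ⟨hs.2, hyΩ hs.1⟩, hs.1⟩⟩
  rw [hK]
  exact hy.preimage_isClosed_of_isClosed isClosed_Icc isClosed_closure

theorem Admissible.abs_le_one {m : ℕ} {β : ℝ → Fin m → ℝ} (hβ : Admissible β) (t : ℝ)
    (i : Fin m) : |β t i| ≤ 1 := by
  rw [← sq_le_one_iff_abs_le_one]
  exact (Finset.single_le_sum (fun j _ => sq_nonneg (β t j)) (Finset.mem_univ i)).trans (hβ.2 t)

theorem Admissible.intervalIntegrable_sum_smul {E : Type*} [NormedAddCommGroup E]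
    [NormedSpace ℝ E] {m : ℕ} {β : ℝ → Fin m → ℝ} (hβ : Admissible β) {f : Fin m → ℝ → E}
    {a b : ℝ} (hf : ∀ i, ContinuousOn (f i) (uIcc a b)) :
    IntervalIntegrable (fun s => ∑ i, β s i • f i s) MeasureTheory.volume a b := by
  have hβi : ∀ i, IntervalIntegrable (fun s => β s i) MeasureTheory.volume a b := fun i =>
    (intervalIntegrable_const (c := (1 : ℝ))).mono_fun' (hβ.1 i).aestronglyMeasurable
      (Eventually.of_forall fun s => hβ.abs_le_one s i)
  simpa only [Finset.sum_fn] using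
    IntervalIntegrable.sum Finset.univ fun i _ => (hβi i).smul_continuousOn (hf i)

theorem nonpos_of_sub_le_mul_sub {g : ℝ → ℝ} {a b A : ℝ} (hg : ContinuousOn g (Icc a b))
    (ha : g a ≤ 0)
    (hstep : ∀ s ∈ Ico a b, ∃ c, ∀ u ∈ Ioc s b, g u - g s ≤ (u - s) * (A * g s + c * (u - s))) :
    ∀ x ∈ Icc a b, g x ≤ 0 := by
  intro x hx
  have hslope : ∀ s ∈ Ico a b, ∀ r, A * g s < r →
      ∃ᶠ u in 𝓝[>] s, (u - s)⁻¹ * (g u - g s) < r := by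
    intro s hs r hr
    obtain ⟨c, hc⟩ := hstep s hs
    have hlim : Tendsto (fun u => A * g s + c * (u - s)) (𝓝[>] s) (𝓝 (A * g s)) := by
      have hcont : Continuous fun u => A * g s + c * (u - s) := by fun_prop
      simpa using (hcont.tendsto s).mono_left nhdsWithin_le_nhds
    refine (((hlim.eventually (gt_mem_nhds hr)).and (Ioc_mem_nhdsGT hs.2)).mono ?_).frequently
    rintro u ⟨hur, hu⟩
    calc (u - s)⁻¹ * (g u - g s) ≤ A * g s + c * (u - s) := by
          rw [inv_mul_le_iff₀ (sub_pos.2 hu.1)]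
          exact hc u hu
      _ < r := hur
  have h := le_gronwallBound_of_liminf_deriv_right_le (f' := fun s => A * g s) (ε := 0) hg hslope
    ha (fun s _ => (add_zero _).ge) x hx
  rwa [gronwallBound_ε0_δ0] at h

section InnerProductSpace

variable {E : Type*} [NormedAddCommGroup E] [InnerProductSpace ℝ E]

theorem norm_sum_smul_le_of_abs_le_one {ι : Type*} [Fintype ι] {c : ι → ℝ}
    (hc : ∀ i, |c i| ≤ 1) (f : ι → E) : ‖∑ i, c i • f i‖ ≤ ∑ i, ‖f i‖ :=
  (norm_sum_le _ _).trans <| Finset.sum_le_sum fun i _ => by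
    rw [norm_smul, Real.norm_eq_abs]
    exact mul_le_of_le_one_left (norm_nonneg _) (hc i)

theorem inner_sum_smul_le_of_inner_eq_zero {ι : Type*} [Fintype ι] {c : ι → ℝ}
    (hc : ∀ i, |c i| ≤ 1) {f : ι → E → E} {U : Set E} {L : NNReal}
    (hf : ∀ i, LipschitzOnWith L (f i) U) {w p z : E} (hp : p ∈ U) (hz : z ∈ U)
    (hw : ∀ i, ⟪w, f i z⟫ = 0) :
    ⟪w, ∑ i, c i • f i p⟫ ≤ Fintype.card ι * L * (‖w‖ * ‖p - z‖) := by
  have hwz : ⟪w, ∑ i, c i • f i z⟫ = 0 := by simp [inner_sum, real_inner_smul_right, hw]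
  calc ⟪w, ∑ i, c i • f i p⟫ = ⟪w, ∑ i, c i • (f i p - f i z)⟫ := by
        simp only [smul_sub, Finset.sum_sub_distrib, inner_sub_right, hwz, sub_zero]
    _ ≤ ‖w‖ * ∑ i : ι, L * ‖p - z‖ := by
        refine (real_inner_le_norm _ _).trans (mul_le_mul_of_nonneg_left ?_ (norm_nonneg w))
        refine (norm_sum_smul_le_of_abs_le_one hc _).trans (Finset.sum_le_sum fun i _ => ?_)
        simpa only [dist_eq_norm] using (hf i).dist_le_mul p hp z hz
    _ = Fintype.card ι * L * (‖w‖ * ‖p - z‖) := by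
        rw [Finset.sum_const, Finset.card_univ, nsmul_eq_mul]
        ring

theorem norm_sub_le_mul_of_sub_eq_integral {y v : ℝ → E} {s u C : ℝ} (hsu : s ≤ u)
    (hy : y u - y s = ∫ σ in s..u, v σ) (hv : ∀ σ ∈ Icc s u, ‖v σ‖ ≤ C) :
    ‖y u - y s‖ ≤ C * (u - s) := by
  rw [hy, ← abs_of_nonneg (sub_nonneg.2 hsu)]
  refine intervalIntegral.norm_integral_le_of_norm_le_const fun σ hσ => hv σ ?_
  rw [uIoc_of_le hsu] at hσ
  exact Ioc_subset_Icc_self hσ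

theorem sub_eq_integral_of_eq_add_integral {y v : ℝ → E} {S : Set ℝ} {a : ℝ} (ha : a ∈ S)
    (hv : ∀ s ∈ S, ∀ u ∈ S, IntervalIntegrable v MeasureTheory.volume s u)
    (hy : ∀ t ∈ S, y t = y a + ∫ σ in a..t, v σ) :
    ∀ s ∈ S, ∀ u ∈ S, y u - y s = ∫ σ in s..u, v σ := fun s hs u hu => by
  rw [hy u hu, hy s hs, add_sub_add_left_eq_sub,
    intervalIntegral.integral_interval_sub_left (hv a ha u hu) (hv a ha s hs)]

theorem sq_infDist_sub_sq_le [CompleteSpace E] {F : Set E} {y v : ℝ → E} {s u C L : ℝ} {z : E}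
    (hL : 0 ≤ L) (hsu : s ≤ u) (hy : ∀ σ ∈ Icc s u, y σ - y s = ∫ τ in s..σ, v τ)
    (hv_int : IntervalIntegrable v MeasureTheory.volume s u) (hvC : ∀ σ ∈ Icc s u, ‖v σ‖ ≤ C)
    (hz : z ∈ F) (hzs : infDist (y s) F = dist (y s) z)
    (hv : ∀ σ ∈ Icc s u, ⟪y s - z, v σ⟫ ≤ L * (‖y s - z‖ * ‖y σ - z‖)) :
    infDist (y u) F ^ 2 - infDist (y s) F ^ 2 ≤ (u - s) *
      (2 * L * infDist (y s) F ^ 2 + (C ^ 2 + 2 * L * C * infDist (y s) F) * (u - s)) := by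
  have hC : 0 ≤ C := (norm_nonneg _).trans (hvC s ⟨le_rfl, hsu⟩)
  have hw : ‖y s - z‖ = infDist (y s) F := by rw [hzs, dist_eq_norm]
  set ρ := infDist (y s) F
  have hdisp : ∀ σ ∈ Icc s u, ‖y σ - y s‖ ≤ C * (σ - s) := fun σ hσ =>
    norm_sub_le_mul_of_sub_eq_integral hσ.1 (hy σ hσ) fun τ hτ => hvC τ ⟨hτ.1, hτ.2.trans hσ.2⟩
  have hpoint : ∀ σ ∈ Icc s u, ⟪y s - z, v σ⟫ ≤ L * (ρ * (ρ + C * (u - s))) := by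
    intro σ hσ
    have hσz : ‖y σ - z‖ ≤ ρ + C * (u - s) := calc
      ‖y σ - z‖ ≤ ‖y σ - y s‖ + ‖y s - z‖ := norm_sub_le_norm_sub_add_norm_sub _ _ _
      _ ≤ C * (u - s) + ρ := by
        rw [hw]; gcongr; exact (hdisp σ hσ).trans (by gcongr; exact hσ.2)
      _ = ρ + C * (u - s) := add_comm _ _
    refine (hv σ hσ).trans ?_
    rw [hw]
    exact mul_le_mul_of_nonneg_left (mul_le_mul_of_nonneg_left hσz infDist_nonneg) hL
  have hinner : ⟪y u - y s, y s - z⟫ ≤ (u - s) * (L * (ρ * (ρ + C * (u - s)))) := by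
    have hcomm := (innerSL ℝ (y s - z)).intervalIntegral_comp_comm hv_int
    simp only [innerSL_apply_apply] at hcomm
    rw [real_inner_comm, hy u ⟨hsu, le_rfl⟩, ← hcomm]
    have hmono := intervalIntegral.integral_mono_on hsu
      ⟨hv_int.1.const_inner (y s - z), hv_int.2.const_inner (y s - z)⟩
      intervalIntegrable_const hpoint
    rwa [intervalIntegral.integral_const, smul_eq_mul] at hmono
  have hfar : infDist (y u) F ≤ ‖(y u - y s) + (y s - z)‖ := by
    rw [sub_add_sub_cancel, ← dist_eq_norm]
    exact infDist_le_dist_of_mem hz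
  have hexpand := norm_add_sq_real (y u - y s) (y s - z)
  have hΔ : ‖y u - y s‖ ^ 2 ≤ (C * (u - s)) ^ 2 := by
    gcongr
    exact hdisp u ⟨hsu, le_rfl⟩
  have hsq : infDist (y u) F ^ 2 ≤ ‖(y u - y s) + (y s - z)‖ ^ 2 := by
    gcongr
    exact infDist_nonneg
  rw [hw] at hexpand
  linarith

theorem mapsTo_of_inner_nearest_le [ProperSpace E] {F : Set E} (hF : IsClosed F) {y v : ℝ → E}
    {a b C L : ℝ} (hL : 0 ≤ L)
    (hy : ∀ s ∈ Icc a b, ∀ u ∈ Icc s b, y u - y s = ∫ σ in s..u, v σ)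
    (hv_int : IntervalIntegrable v MeasureTheory.volume a b) (hvC : ∀ σ ∈ Icc a b, ‖v σ‖ ≤ C)
    (hv : ∀ s ∈ Icc a b, ∀ σ ∈ Icc s b, ∀ z ∈ F, infDist (y s) F = dist (y s) z →
      ⟪y s - z, v σ⟫ ≤ L * (‖y s - z‖ * ‖y σ - z‖))
    (ha : y a ∈ F) : MapsTo y (Icc a b) F := by
  have hlip : LipschitzOnWith C.toNNReal y (Icc a b) := by
    refine LipschitzOnWith.of_dist_le' fun s hs u hu => ?_
    wlog hsu : s ≤ u generalizing s u
    · rw [dist_comm, dist_comm s]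
      exact this u hu s hs (le_of_not_ge hsu)
    rw [dist_comm, dist_eq_norm, Real.dist_eq, abs_sub_comm, abs_of_nonneg (sub_nonneg.2 hsu)]
    exact norm_sub_le_mul_of_sub_eq_integral hsu (hy s hs u ⟨hsu, hu.2⟩)
      fun σ hσ => hvC σ ⟨hs.1.trans hσ.1, hσ.2.trans hu.2⟩
  have hg : ContinuousOn (fun s => infDist (y s) F ^ 2) (Icc a b) :=
    ((continuous_infDist_pt F).comp_continuousOn hlip.continuousOn).pow 2
  have hstep : ∀ s ∈ Ico a b, ∃ c, ∀ u ∈ Ioc s b,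
      infDist (y u) F ^ 2 - infDist (y s) F ^ 2 ≤
        (u - s) * (2 * L * infDist (y s) F ^ 2 + c * (u - s)) := by
    intro s hs
    obtain ⟨z, hz, hzs⟩ := hF.exists_infDist_eq_dist ⟨_, ha⟩ (y s)
    have hsI : s ∈ Icc a b := Ico_subset_Icc_self hs
    refine ⟨_, fun u hu => sq_infDist_sub_sq_le hL hu.1.le
      (fun σ hσ => hy s hsI σ ⟨hσ.1, hσ.2.trans hu.2⟩) (hv_int.mono_set ?_)
      (fun σ hσ => hvC σ ⟨hs.1.trans hσ.1, hσ.2.trans hu.2⟩) hz hzs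
      (fun σ hσ => hv s hsI σ ⟨hσ.1, hσ.2.trans hu.2⟩ z hz hzs)⟩
    rw [uIcc_of_le hu.1.le, uIcc_of_le (hs.1.trans (hu.1.le.trans hu.2))]
    exact Icc_subset_Icc hs.1 hu.2
  have hg0 := nonpos_of_sub_le_mul_sub hg (by simp [infDist_zero_of_mem ha]) hstep
  intro u hu
  rw [hF.mem_iff_infDist_zero ⟨_, ha⟩]
  exact pow_eq_zero_iff two_ne_zero |>.1 (le_antisymm (hg0 u hu) (sq_nonneg _))

end InnerProductSpace

theorem eventually_mem_of_isExtNormal_orthogonal {d m : ℕ} {Ω : Set (EV d)} (hΩ : IsOpen Ω)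
    {Z : Fin m → EV d → EV d} (hZ : ∀ i, LocLipschitzOn (Z i) (closure Ω)) {K : Set (EV d)}
    (hKcl : closure K ∩ Ω ⊆ K)
    (hnormal : ∀ x ∈ Ω, ∀ ν : EV d, IsExtNormal K x ν → ∀ i, dotp (Z i x) ν = 0)
    {β : ℝ → Fin m → ℝ} (hβ : Admissible β) {y : ℝ → EV d} {T b : ℝ} (hTb : T < b)
    (hy : ∀ s ∈ Icc T b, ∀ u ∈ Icc s b, y u - y s = ∫ σ in s..u, ∑ i, β σ i • Z i (y σ))
    (hv_int : IntervalIntegrable (fun σ => ∑ i, β σ i • Z i (y σ)) MeasureTheory.volume T b)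
    (hyc : ContinuousWithinAt y (Icc T b) T) (hyT : y T ∈ K) (hyTΩ : y T ∈ Ω) :
    ∀ᶠ u in 𝓝[≥] T, y u ∈ K := by
  obtain ⟨L, R, hR, hRΩ, hL⟩ :=
    LocLipschitzOn.exists_ball_subset_forall_lipschitzOnWith hΩ hZ hyTΩ
  obtain ⟨b', hb', hyb'⟩ : ∃ b' ∈ Ioc T b, Icc T b' ⊆ y ⁻¹' ball (y T) (R / 2) := by
    have hmem : y ⁻¹' ball (y T) (R / 2) ∈ 𝓝[≥] T := by
      rw [← nhdsWithin_Icc_eq_nhdsGE hTb]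
      exact hyc (ball_mem_nhds _ (half_pos hR))
    obtain ⟨c, hc, hcsub⟩ := mem_nhdsGE_iff_exists_Icc_subset.1 hmem
    exact ⟨min c b, ⟨lt_min hc hTb, min_le_right _ _⟩,
      (Icc_subset_Icc_right (min_le_left _ _)).trans hcsub⟩
  have hyR : ∀ σ ∈ Icc T b', y σ ∈ ball (y T) R := fun σ hσ =>
    ball_subset_ball (half_le_self hR.le) (hyb' hσ)
  have hIcc : Icc T b' ⊆ Icc T b := Icc_subset_Icc_right hb'.2
  have hnear : ∀ s ∈ Icc T b', ∀ z, infDist (y s) (closure K) = dist (y s) z →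
      z ∈ ball (y T) R := fun s hs z hzs => by
    have hsz : dist (y s) z < R / 2 := by
      rw [← hzs, infDist_closure]
      exact (infDist_le_dist_of_mem hyT).trans_lt (mem_ball.1 (hyb' hs))
    rw [mem_ball]
    linarith [dist_triangle z (y s) (y T), dist_comm z (y s), mem_ball.1 (hyb' hs)]
  have hmaps := mapsTo_of_inner_nearest_le isClosed_closure
    (mul_nonneg (Nat.cast_nonneg m) L.coe_nonneg)
    (fun s hs u hu => hy s (hIcc hs) u ⟨hu.1, hu.2.trans hb'.2⟩)
    (hv_int.mono_set (by rw [uIcc_of_le hb'.1.le, uIcc_of_le hTb.le]; exact hIcc))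
    (fun σ hσ => (norm_sum_smul_le_of_abs_le_one (hβ.abs_le_one σ) _).trans
      (Finset.sum_le_sum fun i _ => (hL i).norm_le_add_of_mem_ball (hyR σ hσ)))
    (fun s hs σ hσ z hz hzs => by
      simpa using inner_sum_smul_le_of_inner_eq_zero (hβ.abs_le_one σ) hL
        (hyR σ ⟨hs.1.trans hσ.1, hσ.2⟩) (hnear s hs z hzs) fun i =>
          inner_sub_eq_zero_of_isExtNormal (hnormal z (hRΩ (hnear s hs z hzs)) · · i) hz
            (infDist_closure (s := K) ▸ hzs))
    (subset_closure hyT)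
  filter_upwards [Icc_mem_nhdsGE hb'.1] with u hu
  exact hKcl ⟨hmaps hu, hRΩ (hyR u hu)⟩

theorem invariance_of_relatively_closed_set_general {d m : ℕ} (Ω : Set (EV d)) (hΩ : IsOpen Ω)
    (Z : Fin m → EV d → EV d) (hZlip : ∀ i, LocLipschitzOn (Z i) (closure Ω))
    (K : Set (EV d)) (hKcl : closure K ∩ Ω ⊆ K)
    (hnormal : ∀ x ∈ Ω, ∀ ν : EV d, IsExtNormal K x ν → ∀ i, dotp (Z i x) ν = 0) :
    ∀ x ∈ K, ∀ β : ℝ → Fin m → ℝ, Admissible β → ∀ τ : ℝ, 0 < τ →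
      ∀ y : ℝ → EV d, y 0 = x → ContinuousOn y (Ico 0 τ) →
        (∀ t ∈ Ico 0 τ, y t ∈ Ω) →
        (∀ t ∈ Ico 0 τ, y t = y 0 + ∫ s in (0:ℝ)..t, ∑ i, β s i • Z i (y s)) →
        ∀ t ∈ Ico 0 τ, y t ∈ K := by
  intro x hxK β hβ τ _ y hy0 hycont hyΩ hyeq t ht
  have hv_int : ∀ a ∈ Ico 0 τ, ∀ b ∈ Ico 0 τ,
      IntervalIntegrable (fun σ => ∑ i, β σ i • Z i (y σ)) MeasureTheory.volume a b :=
    fun a ha b hb => hβ.intervalIntegrable_sum_smul fun i =>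
      (hZlip i).continuousOn.comp (hycont.mono (ordConnected_Ico.uIcc_subset ha hb))
        fun s hs => subset_closure (hyΩ s (ordConnected_Ico.uIcc_subset ha hb hs))
  have hy := sub_eq_integral_of_eq_add_integral (show (0 : ℝ) ∈ Ico 0 τ from
    ⟨le_rfl, ht.1.trans_lt ht.2⟩) hv_int hyeq
  have hsub : Icc 0 t ⊆ Ico 0 τ := fun s hs => ⟨hs.1, hs.2.trans_lt ht.2⟩
  refine ((hycont.mono hsub).isClosed_preimage_inter_Icc (fun s hs => hyΩ s (hsub hs))
    hKcl).Icc_subset_of_forall_mem_nhdsWithin (show y 0 ∈ K by rwa [hy0])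
    (fun T ⟨hyT, hT⟩ => ?_) ⟨ht.1, le_rfl⟩
  have hTt : Icc T t ⊆ Ico 0 τ := fun s hs => hsub ⟨hT.1.trans hs.1, hs.2⟩
  have hTτ : T ∈ Ico 0 τ := hTt (left_mem_Icc.2 hT.2.le)
  exact nhdsWithin_mono T Ioi_subset_Ici_self <|
    eventually_mem_of_isExtNormal_orthogonal hΩ hZlip hKcl hnormal hβ hT.2
      (fun s hs u hu => hy s (hTt hs) u (hTt ⟨hs.1.trans hu.1, hu.2⟩))
      (hv_int T hTτ t (hTt (right_mem_Icc.2 hT.2.le)))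
      ((hycont.mono hTt) T (left_mem_Icc.2 hT.2.le)) hyT (hyΩ T hTτ)

/-- Theorem 2.3, Bony-type invariance: if every generalized exterior normal
to a relatively closed set `K ⊆ Ω` is orthogonal to all the fields `Zᵢ`, then `K` is invariant
for the control system `y' = ∑ᵢ βᵢ Zᵢ(y)`. -/
theorem invariance_of_relatively_closed_set {d m : ℕ} (Ω : Set (EV d)) (hΩ : IsOpen Ω)
    (Z : Fin m → EV d → EV d) (hZlip : ∀ i, LocLipschitzOn (Z i) (closure Ω))
    (K : Set (EV d)) (hKne : K.Nonempty) (hKΩ : K ⊆ Ω) (hKcl : closure K ∩ Ω ⊆ K)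
    (hnormal : ∀ x ∈ Ω, ∀ ν : EV d, IsExtNormal K x ν → ∀ i, dotp (Z i x) ν = 0) :
    ∀ x ∈ K, ∀ β : ℝ → Fin m → ℝ, Admissible β → ∀ τ : ℝ, 0 < τ →
      ∀ y : ℝ → EV d, y 0 = x → ContinuousOn y (Ico 0 τ) →
        (∀ t ∈ Ico 0 τ, y t ∈ Ω) →
        (∀ t ∈ Ico 0 τ, y t = y 0 + ∫ s in (0:ℝ)..t, ∑ i, β s i • Z i (y s)) →
        ∀ t ∈ Ico 0 τ, y t ∈ K :=
  invariance_of_relatively_closed_set_general Ω hΩ Z hZlip K hKcl hnormal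
end
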